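/- If {(c_σ, w_σ)}_{σ ∈ S_{n−1}, w_σ ≠ 0} is a signed fundamental domain for the action of Ṽ on ℝ^{n−1}_+, then {(C_σ, w_σ)}_{σ ∈ S_{n−1}, w_σ ≠ 0} is a signed fundamental domain for the action of V on ℝ^n_+. -/

import Mathlib

/-!
The map `ℓ` forgets exactly the scaling of a point of `ℝ^(n+1)_+`. Totally positive units
have norm `1`, so two points of one `V`-orbit have the same coordinate product; if they also
have the same image under `ℓ`, they differ by a positive scalar `t` with `t ^ (n+1) = 1`, hence
coincide. Normalising the cone coefficients `c_i` of `p = ∑ c_i f_{i,σ}` to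
`b_i = c_i f_{i,σ}^{(n)} / p^{(n)}` (which sum to `1` and keep their sign conditions) shows
`p ∈ C_σ ↔ ℓ(p) ∈ c_σ`. Thus `ℓ` is a bijection from `C_σ ∩ V·x` onto `c_σ ∩ Ṽ·ℓ(x)`, and both
the uniform bound and the weighted count transfer from the simplices to the cones.
-/

open scoped Classical NumberField
open NumberField

noncomputable section

namespace SignedDomain

variable {K : Type*} [Field K] [NumberField K] {n : ℕ}

/-- Embedding of `K` into `ℝ^(n+1)` via the real embeddings `τ`. -/
def emb (τ : Fin (n + 1) → (K →+* ℝ)) (x : K) : Fin (n + 1) → ℝ :=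
  fun i => τ i x

/-- The group `E₊` of totally positive units of the ring of integers. -/
def Eplus (τ : Fin (n + 1) → (K →+* ℝ)) : Subgroup (𝓞 K)ˣ where
  carrier := {u | ∀ i, 0 < τ i ((u : 𝓞 K) : K)}
  one_mem' := by intro i; simp
  mul_mem' := by
    intro a b ha hb i
    have h : ((↑(a * b) : 𝓞 K) : K) = ((↑a : 𝓞 K) : K) * ((↑b : 𝓞 K) : K) := by
      push_cast; ring
    simp only [Set.mem_setOf_eq] at *
    rw [h, map_mul]
    exact mul_pos (ha i) (hb i)
  inv_mem' := by
    intro a ha i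
    simp only [Set.mem_setOf_eq] at *
    have h : τ i ((↑(a⁻¹) : 𝓞 K) : K) * τ i ((↑a : 𝓞 K) : K) = 1 := by
      rw [← map_mul]
      have : ((↑(a⁻¹) : 𝓞 K) : K) * ((↑a : 𝓞 K) : K) = 1 := by
        have := a.inv_mul
        calc ((↑(a⁻¹) : 𝓞 K) : K) * ((↑a : 𝓞 K) : K) = ((↑(a⁻¹ * a) : 𝓞 K) : K) := by push_cast; ring
        _ = 1 := by rw [inv_mul_cancel]; simp
      rw [this, map_one]
    nlinarith [ha i]

/-- The subgroup generated by the chosen units. -/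
def V (ε : Fin n → (𝓞 K)ˣ) : Subgroup (𝓞 K)ˣ :=
  Subgroup.closure (Set.range ε)

/-- The vectors `f_{i,σ} = ∏_{j<i} ε_{σ(j)}`, viewed in `ℝ^(n+1)`. -/
def fvec (τ : Fin (n + 1) → (K →+* ℝ)) (ε : Fin n → (𝓞 K)ˣ) (σ : Equiv.Perm (Fin n))
    (i : Fin (n + 1)) : Fin (n + 1) → ℝ :=
  fun l => ∏ j ∈ Finset.univ.filter (fun j : Fin n => (j : ℕ) < (i : ℕ)), τ l ((ε (σ j) : 𝓞 K) : K)

/-- The matrix with columns `Log ε_i` (first `n` coordinates of the logarithmic embedding). -/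
def LogMat (τ : Fin (n + 1) → (K →+* ℝ)) (ε : Fin n → (𝓞 K)ˣ) : Matrix (Fin n) (Fin n) ℝ :=
  Matrix.of fun l i => Real.log (τ (Fin.castSucc l) ((ε i : 𝓞 K) : K))

/-- The matrix with columns `f_{1,σ},…,f_{n+1,σ}`. -/
def Fmat (τ : Fin (n + 1) → (K →+* ℝ)) (ε : Fin n → (𝓞 K)ˣ) (σ : Equiv.Perm (Fin n)) :
    Matrix (Fin (n + 1)) (Fin (n + 1)) ℝ :=
  Matrix.of fun l i => fvec τ ε σ i l

/-- The weight `w_σ`. -/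
def w (τ : Fin (n + 1) → (K →+* ℝ)) (ε : Fin n → (𝓞 K)ˣ) (σ : Equiv.Perm (Fin n)) : ℝ :=
  ((-1 : ℝ) ^ n * ((Equiv.Perm.sign σ : ℤ) : ℝ) * Real.sign (Fmat τ ε σ).det) /
    Real.sign (LogMat τ ε).det

/-- The last standard basis vector `e_n` of `ℝ^(n+1)`. -/
def en : Fin (n + 1) → ℝ := fun i => if i = Fin.last n then 1 else 0

/-- `e_n` lies in the open half-space `H_{i,σ}^+` (on the same side as `f_{i,σ}`):
when the `f_{j,σ}` form a basis this says that the `i`-th coordinate of `e_n`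
with respect to this basis is positive. -/
def posSide (τ : Fin (n + 1) → (K →+* ℝ)) (ε : Fin n → (𝓞 K)ˣ) (σ : Equiv.Perm (Fin n))
    (i : Fin (n + 1)) : Prop :=
  ∃ c : Fin (n + 1) → ℝ, (en = ∑ j, c j • fvec τ ε σ j) ∧ 0 < c i

/-- The coefficient range `R_{i,σ}`. -/
def Rset (τ : Fin (n + 1) → (K →+* ℝ)) (ε : Fin n → (𝓞 K)ˣ) (σ : Equiv.Perm (Fin n))
    (i : Fin (n + 1)) : Set ℝ :=
  if posSide τ ε σ i then Set.Ici 0 else Set.Ioi 0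

/-- The (partly open) cone `C_σ`; empty when `w_σ = 0`. -/
def Cone (τ : Fin (n + 1) → (K →+* ℝ)) (ε : Fin n → (𝓞 K)ˣ) (σ : Equiv.Perm (Fin n)) :
    Set (Fin (n + 1) → ℝ) :=
  if w τ ε σ ≠ 0 then
    {x | ∃ c : Fin (n + 1) → ℝ, (∀ i, c i ∈ Rset τ ε σ i) ∧ x = ∑ j, c j • fvec τ ε σ j}
  else ∅

/-- The orbit `V·x` of `x ∈ ℝ^(n+1)` under the componentwise action of `V`. -/
def orbit (τ : Fin (n + 1) → (K →+* ℝ)) (ε : Fin n → (𝓞 K)ˣ) (x : Fin (n + 1) → ℝ) :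
    Set (Fin (n + 1) → ℝ) :=
  {y | ∃ u ∈ V ε, y = emb τ ((u : 𝓞 K) : K) * x}

/-- The positive orthant of `ℝ^m`. -/
def posOrthant (m : ℕ) : Set (Fin m → ℝ) := {x | ∀ i, 0 < x i}

/-- The projection `ℓ(x) = (x₁/xₙ, …, x_{n-1}/xₙ)`. -/
def ell (x : Fin (n + 1) → ℝ) : Fin n → ℝ :=
  fun j => x (Fin.castSucc j) / x (Fin.last n)

/-- The vertices `φ_{i,σ} = ℓ(f_{i+1,σ})`. -/
def phi (τ : Fin (n + 1) → (K →+* ℝ)) (ε : Fin n → (𝓞 K)ˣ) (σ : Equiv.Perm (Fin n))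
    (i : Fin (n + 1)) : Fin n → ℝ :=
  ell (fvec τ ε σ i)

/-- The coefficient range `J_{i,σ}`. -/
def Jset (τ : Fin (n + 1) → (K →+* ℝ)) (ε : Fin n → (𝓞 K)ˣ) (σ : Equiv.Perm (Fin n))
    (i : Fin (n + 1)) : Set ℝ :=
  if posSide τ ε σ i then Set.Icc 0 1 else Set.Ioc 0 1

/-- The (partly open) simplex `c_σ`; empty when `w_σ = 0`. -/
def simplex (τ : Fin (n + 1) → (K →+* ℝ)) (ε : Fin n → (𝓞 K)ˣ) (σ : Equiv.Perm (Fin n)) :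
    Set (Fin n → ℝ) :=
  if w τ ε σ ≠ 0 then
    {y | ∃ b : Fin (n + 1) → ℝ, (∑ i, b i = 1) ∧ (∀ i, b i ∈ Jset τ ε σ i) ∧
      y = ∑ i, b i • phi τ ε σ i}
  else ∅

/-- The orbit `Ṽ·y` of `y ∈ ℝ^n` under the componentwise action of `Ṽ = ℓ(V)`. -/
def torbit (τ : Fin (n + 1) → (K →+* ℝ)) (ε : Fin n → (𝓞 K)ˣ) (y : Fin n → ℝ) :
    Set (Fin n → ℝ) :=
  {z | ∃ u ∈ V ε, z = ell (emb τ ((u : 𝓞 K) : K)) * y}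

end SignedDomain

namespace SignedDomain

variable {K : Type*} [Field K] {n : ℕ}

theorem ell_mul (a x : Fin (n + 1) → ℝ) : ell (a * x) = ell a * ell x :=
  funext fun _ => mul_div_mul_comm _ _ _ _

theorem eq_smul_of_ell_eq {a b : Fin (n + 1) → ℝ} (ha : a (Fin.last n) ≠ 0)
    (hb : b (Fin.last n) ≠ 0) (h : ell a = ell b) :
    a = (a (Fin.last n) / b (Fin.last n)) • b := by
  funext i
  induction i using Fin.lastCases with
  | last => simp [hb]
  | cast j =>
    have hj : a j.castSucc / a (Fin.last n) = b j.castSucc / b (Fin.last n) := congr_fun h j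
    rw [Pi.smul_apply, smul_eq_mul, div_mul_eq_mul_div, mul_div_assoc, ← hj, mul_div_cancel₀ _ ha]

theorem eq_of_ell_eq_of_last_eq {a b : Fin (n + 1) → ℝ} (ha : a (Fin.last n) ≠ 0)
    (hlast : a (Fin.last n) = b (Fin.last n)) (h : ell a = ell b) : a = b := by
  rw [eq_smul_of_ell_eq ha (hlast ▸ ha) h, hlast, div_self (hlast ▸ ha), one_smul]

theorem eq_of_ell_eq_of_prod_eq {a b : Fin (n + 1) → ℝ} (ha : ∀ i, 0 < a i) (hb : ∀ i, 0 < b i)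
    (h : ell a = ell b) (hprod : ∏ i, a i = ∏ i, b i) : a = b := by
  set t := a (Fin.last n) / b (Fin.last n)
  have hab : a = t • b := eq_smul_of_ell_eq (ha _).ne' (hb _).ne' h
  have hprod_smul : ∏ i, a i = t ^ (n + 1) * ∏ i, b i := by
    rw [hab]
    simp only [Pi.smul_apply, smul_eq_mul, Finset.prod_mul_distrib, Finset.prod_const,
      Finset.card_univ, Fintype.card_fin]
  have htpow : t ^ (n + 1) = 1 :=
    mul_right_cancel₀ (Finset.prod_pos fun i _ => hb i).ne' (by rw [← hprod_smul, hprod, one_mul])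
  have ht : t = 1 := (pow_eq_one_iff_of_nonneg (div_pos (ha _) (hb _)).le n.succ_ne_zero).1 htpow
  rw [hab, ht, one_smul]

theorem ell_sum_smul {ι : Type*} [Fintype ι] (c : ι → ℝ) (f : ι → Fin (n + 1) → ℝ)
    (hf : ∀ i, f i (Fin.last n) ≠ 0) :
    ell (∑ i, c i • f i) =
      ∑ i, (c i * (f i (Fin.last n) / (∑ j, c j • f j) (Fin.last n))) • ell (f i) := by
  funext k
  simp only [ell, Finset.sum_apply, Pi.smul_apply, smul_eq_mul, Finset.sum_div]
  refine Finset.sum_congr rfl fun i _ => ?_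
  field_simp [hf i]

theorem exists_cone_coeffs_iff_exists_simplex_coeffs {ι : Type*} [Fintype ι]
    {f : ι → Fin (n + 1) → ℝ} (hf : ∀ i, 0 < f i (Fin.last n)) {S : ι → Set ℝ}
    (hS_nonneg : ∀ i, S i ⊆ Set.Ici 0) (hS_mul : ∀ i c {t : ℝ}, 0 < t → (c * t ∈ S i ↔ c ∈ S i))
    {p : Fin (n + 1) → ℝ} (hp : 0 < p (Fin.last n)) :
    (∃ c : ι → ℝ, (∀ i, c i ∈ S i) ∧ p = ∑ i, c i • f i) ↔
      ∃ b : ι → ℝ, ∑ i, b i = 1 ∧ (∀ i, b i ∈ S i ∩ Set.Iic 1) ∧ ell p = ∑ i, b i • ell (f i) := by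
  have hf_ne i := (hf i).ne'
  constructor
  · rintro ⟨c, hc, rfl⟩
    set b := fun i => c i * (f i (Fin.last n) / (∑ j, c j • f j) (Fin.last n))
    have hb : ∀ i, b i ∈ S i := fun i => (hS_mul i _ (div_pos (hf i) hp)).2 (hc i)
    have hb_sum : ∑ i, b i = 1 := by
      rw [← div_self hp.ne']
      simp only [b, ← mul_div_assoc, ← Finset.sum_div, Finset.sum_apply, Pi.smul_apply,
        smul_eq_mul]
    refine ⟨b, hb_sum, fun i => ⟨hb i, ?_⟩, ell_sum_smul c f hf_ne⟩
    rw [Set.mem_Iic, ← hb_sum]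
    exact Finset.single_le_sum (fun j _ => hS_nonneg j (hb j)) (Finset.mem_univ i)
  · rintro ⟨b, hb_sum, hb, hp_ell⟩
    set c := fun i => b i * (p (Fin.last n) / f i (Fin.last n))
    have hq_last : (∑ i, c i • f i) (Fin.last n) = p (Fin.last n) := by
      rw [Finset.sum_apply]
      calc ∑ i, (c i • f i) (Fin.last n) = ∑ i, b i * p (Fin.last n) :=
            Finset.sum_congr rfl fun i _ => by
              simp only [c, Pi.smul_apply, smul_eq_mul]
              field_simp [hf_ne i]
        _ = p (Fin.last n) := by rw [← Finset.sum_mul, hb_sum, one_mul]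
    refine ⟨c, fun i => (hS_mul i _ (div_pos hp (hf i))).2 (hb i).1, ?_⟩
    refine eq_of_ell_eq_of_last_eq hp.ne' hq_last.symm ?_
    rw [hp_ell, ell_sum_smul c f hf_ne, hq_last]
    refine Finset.sum_congr rfl fun i _ => ?_
    simp only [c]
    field_simp [hf_ne i, hp.ne']

theorem ell_mem_posOrthant {x : Fin (n + 1) → ℝ} (hx : x ∈ posOrthant (n + 1)) :
    ell x ∈ posOrthant n :=
  fun _ => div_pos (hx _) (hx _)

section

variable {τ : Fin (n + 1) → (K →+* ℝ)} {ε : Fin n → (𝓞 K)ˣ} {σ : Equiv.Perm (Fin n)}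

theorem Jset_eq_Rset_inter_Iic (i : Fin (n + 1)) :
    Jset τ ε σ i = Rset τ ε σ i ∩ Set.Iic 1 := by
  unfold Jset Rset
  split_ifs
  · exact Set.Ici_inter_Iic.symm
  · exact Set.Ioi_inter_Iic.symm

theorem Rset_subset_Ici (i : Fin (n + 1)) : Rset τ ε σ i ⊆ Set.Ici 0 := by
  unfold Rset
  split_ifs
  · exact subset_rfl
  · exact Set.Ioi_subset_Ici_self

theorem mul_mem_Rset_iff (i : Fin (n + 1)) (c : ℝ) {t : ℝ} (ht : 0 < t) :
    c * t ∈ Rset τ ε σ i ↔ c ∈ Rset τ ε σ i := by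
  unfold Rset
  split_ifs
  · exact mul_nonneg_iff_of_pos_right ht
  · exact mul_pos_iff_of_pos_right ht

theorem pos_of_mem_V (hpos : ∀ i, ε i ∈ Eplus τ) {u : (𝓞 K)ˣ} (hu : u ∈ V ε) (i : Fin (n + 1)) :
    0 < τ i ((u : 𝓞 K) : K) :=
  (Subgroup.closure_le _).2 (Set.range_subset_iff.2 hpos) hu i

theorem fvec_pos (hpos : ∀ i, ε i ∈ Eplus τ) (σ : Equiv.Perm (Fin n)) (i l : Fin (n + 1)) :
    0 < fvec τ ε σ i l :=
  Finset.prod_pos fun j _ => hpos (σ j) l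

theorem mem_Cone_iff_ell_mem_simplex (hpos : ∀ i, ε i ∈ Eplus τ) {p : Fin (n + 1) → ℝ}
    (hp : 0 < p (Fin.last n)) : p ∈ Cone τ ε σ ↔ ell p ∈ simplex τ ε σ := by
  unfold Cone simplex
  split_ifs
  · simp only [Jset_eq_Rset_inter_Iic]
    exact exists_cone_coeffs_iff_exists_simplex_coeffs (fun i => fvec_pos hpos σ i _)
      Rset_subset_Ici mul_mem_Rset_iff hp
  · exact Iff.rfl

theorem prod_emb_eq_norm [NumberField K] (hτ : Function.Injective τ)
    (hdeg : Module.finrank ℚ K = n + 1) (x : K) : ∏ i, emb τ x i = (Algebra.norm ℚ x : ℝ) := by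
  have hinj : Function.Injective fun i => Complex.ofRealHom.comp (τ i) := fun i j h =>
    hτ (RingHom.ext fun y => Complex.ofReal_injective (DFunLike.congr_fun h y))
  have hbij : Function.Bijective fun i => Complex.ofRealHom.comp (τ i) :=
    (Fintype.bijective_iff_injective_and_card _).2 ⟨hinj, by simp [Embeddings.card, hdeg]⟩
  apply Complex.ofReal_injective
  calc ((∏ i, emb τ x i : ℝ) : ℂ) = ∏ φ : K →+* ℂ, φ x := by
        push_cast
        exact Fintype.prod_bijective _ hbij _ _ fun _ => rfl
    _ = ∏ φ : K →ₐ[ℚ] ℂ, φ x :=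
        Fintype.prod_equiv (RingHom.equivRatAlgHom K ℂ) _ _ fun _ => rfl
    _ = algebraMap ℚ ℂ (Algebra.norm ℚ x) := (Algebra.norm_eq_prod_embeddings ℚ ℂ x).symm
    _ = _ := by simp

theorem prod_emb_eq_one_of_mem_V [NumberField K] (hτ : Function.Injective τ)
    (hdeg : Module.finrank ℚ K = n + 1) (hpos : ∀ i, ε i ∈ Eplus τ) {u : (𝓞 K)ˣ} (hu : u ∈ V ε) :
    ∏ i, emb τ ((u : 𝓞 K) : K) i = 1 := by
  have hnorm : |(Algebra.norm ℚ ((u : 𝓞 K) : K) : ℝ)| = 1 := by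
    have := isUnit_iff_norm.1 u.isUnit
    rw [RingOfIntegers.coe_norm] at this
    exact_mod_cast this
  rw [← hnorm, ← prod_emb_eq_norm hτ hdeg]
  exact (abs_of_pos (Finset.prod_pos fun i _ => pos_of_mem_V hpos hu i)).symm

theorem mem_posOrthant_of_mem_orbit (hpos : ∀ i, ε i ∈ Eplus τ) {x p : Fin (n + 1) → ℝ}
    (hx : x ∈ posOrthant (n + 1)) (hp : p ∈ orbit τ ε x) : p ∈ posOrthant (n + 1) := by
  obtain ⟨u, hu, rfl⟩ := hp
  exact fun i => mul_pos (pos_of_mem_V hpos hu i) (hx i)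

theorem prod_eq_of_mem_orbit [NumberField K] (hτ : Function.Injective τ)
    (hdeg : Module.finrank ℚ K = n + 1) (hpos : ∀ i, ε i ∈ Eplus τ) {x p : Fin (n + 1) → ℝ}
    (hp : p ∈ orbit τ ε x) : ∏ i, p i = ∏ i, x i := by
  obtain ⟨u, hu, rfl⟩ := hp
  rw [Pi.mul_def, Finset.prod_mul_distrib, prod_emb_eq_one_of_mem_V hτ hdeg hpos hu, one_mul]

theorem injOn_ell_orbit [NumberField K] (hτ : Function.Injective τ)
    (hdeg : Module.finrank ℚ K = n + 1) (hpos : ∀ i, ε i ∈ Eplus τ) {x : Fin (n + 1) → ℝ}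
    (hx : x ∈ posOrthant (n + 1)) : Set.InjOn ell (orbit τ ε x) := fun _ hp _ hq hpq =>
  eq_of_ell_eq_of_prod_eq (mem_posOrthant_of_mem_orbit hpos hx hp)
    (mem_posOrthant_of_mem_orbit hpos hx hq) hpq
    ((prod_eq_of_mem_orbit hτ hdeg hpos hp).trans (prod_eq_of_mem_orbit hτ hdeg hpos hq).symm)

theorem torbit_ell (x : Fin (n + 1) → ℝ) : torbit τ ε (ell x) = ell '' orbit τ ε x := by
  ext z
  constructor
  · rintro ⟨u, hu, rfl⟩
    exact ⟨_, ⟨u, hu, rfl⟩, ell_mul _ _⟩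
  · rintro ⟨_, ⟨u, hu, rfl⟩, rfl⟩
    exact ⟨u, hu, ell_mul _ _⟩

theorem bijOn_ell_Cone_inter_orbit [NumberField K] (hτ : Function.Injective τ)
    (hdeg : Module.finrank ℚ K = n + 1) (hpos : ∀ i, ε i ∈ Eplus τ) (σ : Equiv.Perm (Fin n))
    {x : Fin (n + 1) → ℝ} (hx : x ∈ posOrthant (n + 1)) :
    Set.BijOn ell (Cone τ ε σ ∩ orbit τ ε x) (simplex τ ε σ ∩ torbit τ ε (ell x)) := by
  have hCone : Cone τ ε σ ∩ orbit τ ε x = orbit τ ε x ∩ ell ⁻¹' simplex τ ε σ := by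
    ext p
    rw [Set.mem_inter_iff, and_comm]
    exact and_congr_right fun ho =>
      mem_Cone_iff_ell_mem_simplex hpos (mem_posOrthant_of_mem_orbit hpos hx ho _)
  rw [hCone, torbit_ell, Set.inter_comm (simplex τ ε σ), ← Set.image_inter_preimage]
  exact ((injOn_ell_orbit hτ hdeg hpos hx).mono Set.inter_subset_left).bijOn_image

end

theorem signed_domain_of_cones_of_signed_domain_of_simplices_general
    {K : Type*} [Field K] [NumberField K] {n : ℕ}
    (τ : Fin (n + 1) → (K →+* ℝ)) (hτ : Function.Injective τ)
    (hdeg : Module.finrank ℚ K = n + 1)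
    (ε : Fin n → (𝓞 K)ˣ) (hpos : ∀ i, ε i ∈ Eplus τ)
    (B : ℕ)
    (hbound : ∀ y ∈ posOrthant n, ∀ σ : Equiv.Perm (Fin n),
      (simplex τ ε σ ∩ torbit τ ε y).Finite ∧ (simplex τ ε σ ∩ torbit τ ε y).ncard ≤ B)
    (hsigned : ∀ y ∈ posOrthant n,
      ∑ σ : Equiv.Perm (Fin n), w τ ε σ * ((simplex τ ε σ ∩ torbit τ ε y).ncard : ℝ) = 1) :
    (∃ B' : ℕ, ∀ x ∈ posOrthant (n + 1), ∀ σ : Equiv.Perm (Fin n),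
      (Cone τ ε σ ∩ orbit τ ε x).Finite ∧ (Cone τ ε σ ∩ orbit τ ε x).ncard ≤ B') ∧
    ∀ x ∈ posOrthant (n + 1),
      ∑ σ : Equiv.Perm (Fin n), w τ ε σ * ((Cone τ ε σ ∩ orbit τ ε x).ncard : ℝ) = 1 := by
  have hbij := fun σ x (hx : x ∈ posOrthant (n + 1)) => bijOn_ell_Cone_inter_orbit hτ hdeg hpos σ hx
  refine ⟨⟨B, fun x hx σ => ?_⟩, fun x hx => ?_⟩
  · rw [(hbij σ x hx).finite_iff_finite, (hbij σ x hx).ncard_eq]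
    exact hbound _ (ell_mem_posOrthant hx) σ
  · simp only [fun σ => (hbij σ x hx).ncard_eq]
    exact hsigned _ (ell_mem_posOrthant hx)

/-- **Proposition 9.** If the signed simplices `{(c_σ, w_σ)}` form a signed fundamental
domain for the action of `Ṽ` on `ℝ^n_+`, then the signed cones `{(C_σ, w_σ)}` form a
signed fundamental domain for the action of `V` on `ℝ^{n+1}_+`. -/
theorem signed_domain_of_cones_of_signed_domain_of_simplices
    {K : Type*} [Field K] [NumberField K] {n : ℕ} (hn : 1 ≤ n)
    (τ : Fin (n + 1) → (K →+* ℝ)) (hτ : Function.Injective τ)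
    (hdeg : Module.finrank ℚ K = n + 1)
    (ε : Fin n → (𝓞 K)ˣ) (hpos : ∀ i, ε i ∈ Eplus τ)
    (B : ℕ)
    (hbound : ∀ y ∈ posOrthant n, ∀ σ : Equiv.Perm (Fin n),
      (simplex τ ε σ ∩ torbit τ ε y).Finite ∧ (simplex τ ε σ ∩ torbit τ ε y).ncard ≤ B)
    (hsigned : ∀ y ∈ posOrthant n,
      ∑ σ : Equiv.Perm (Fin n), w τ ε σ * ((simplex τ ε σ ∩ torbit τ ε y).ncard : ℝ) = 1) :
    (∃ B' : ℕ, ∀ x ∈ posOrthant (n + 1), ∀ σ : Equiv.Perm (Fin n),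
      (Cone τ ε σ ∩ orbit τ ε x).Finite ∧ (Cone τ ε σ ∩ orbit τ ε x).ncard ≤ B') ∧
    ∀ x ∈ posOrthant (n + 1),
      ∑ σ : Equiv.Perm (Fin n), w τ ε σ * ((Cone τ ε σ ∩ orbit τ ε x).ncard : ℝ) = 1 :=
  signed_domain_of_cones_of_signed_domain_of_simplices_general τ hτ hdeg ε hpos B hbound hsigned

end SignedDomain
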